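/- Let p, m, q, T be positive integers and let Y ∈ ℝ^{p×T}, Z ∈ ℝ^{m×T}, P ∈ ℝ^{q×T}, E ∈ ℝ^{p×T}, A ∈ ℝ^{p×m}, Φ ∈ ℝ^{p×q} satisfy Y = A·Z + Φ·P + E. Let λ_A > 0 and λ_Φ > 0 satisfy λ_A ≥ (3/T)·‖E·Zᵀ‖₂ and λ_Φ ≥ (2/T)·‖vec(E·Pᵀ)‖_∞, define L(A',Φ') = (1/(2T))·‖Y − A'·Z − Φ'·P‖_F² + λ_A·‖A'‖_* + λ_Φ·‖vec(Φ')‖₁, and suppose Â, Φ̂ satisfy L(Â,Φ̂) ≤ L(A,Φ). Let [U_k U_c] ∈ ℝ^{p×p} and [V_k V_c] ∈ ℝ^{m×m} be orthogonal matrices with U_k ∈ ℝ^{p×k}, V_k ∈ ℝ^{m×k}, such that A = U_k·D·V_kᵀ for some D ∈ ℝ^{k×k}; set Δ_A = Â − A, Δ_{A,2} = U_c·U_cᵀ·Δ_A·V_c·V_cᵀ, Δ_{A,1} = Δ_A − Δ_{A,2}. Let S be the support of Φ, Δ_Φ = Φ̂ − Φ, and let Δ_{Φ,1} agree with Δ_Φ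 on entries in S and vanish elsewhere, with Δ_{Φ,2} = Δ_Φ − Δ_{Φ,1}. Then λ_A·‖Δ_{A,2}‖_* + λ_Φ·‖vec(Δ_{Φ,2})‖₁ ≤ 3·λ_A·‖Δ_{A,1}‖_* + 3·λ_Φ·‖vec(Δ_{Φ,1})‖₁. -/

import Mathlib

open Matrix

/-- The positive semidefinite square root of a positive semidefinite matrix
(the definition of `Matrix.PosSemidef.sqrt` in the older Mathlib, since removed). -/
noncomputable def psdSqrt {r : ℕ} {S : Matrix (Fin r) (Fin r) ℝ} (hS : S.PosSemidef) :
    Matrix (Fin r) (Fin r) ℝ :=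
  hS.1.eigenvectorUnitary.1 * diagonal ((↑) ∘ (√·) ∘ hS.1.eigenvalues) *
    (star hS.1.eigenvectorUnitary : Matrix (Fin r) (Fin r) ℝ)

/-- Frobenius norm of a real matrix: `(tr(MᵀM))^{1/2}`. -/
noncomputable def frobNorm {m n : ℕ} (M : Matrix (Fin m) (Fin n) ℝ) : ℝ :=
  Real.sqrt ((Mᵀ * M).trace)

/-- Nuclear norm of a real matrix: the trace of the positive semidefinite
square root of `MᵀM` (= sum of singular values). -/
noncomputable def nuclearNorm {m n : ℕ} (M : Matrix (Fin m) (Fin n) ℝ) : ℝ :=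
  (psdSqrt (Matrix.posSemidef_conjTranspose_mul_self M)).trace

/-- Spectral (ℓ2 → ℓ2 operator) norm of a real matrix: its largest singular value. -/
noncomputable def opNorm {m n : ℕ} (M : Matrix (Fin m) (Fin n) ℝ) : ℝ :=
  ‖LinearMap.toContinuousLinearMap (Matrix.toEuclideanLin M)‖

/-- The ℓ1 norm of the vectorization of a matrix. -/
noncomputable def vecL1 {m n : ℕ} (M : Matrix (Fin m) (Fin n) ℝ) : ℝ :=
  ∑ i, ∑ j, |M i j|

/-- The ℓ∞ norm of the vectorization of a matrix. -/
noncomputable def vecLinf {m n : ℕ} (M : Matrix (Fin m) (Fin n) ℝ) : ℝ :=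
  ⨆ i, ⨆ j, |M i j|

/-- Frobenius (trace) inner product of two matrices. -/
noncomputable def traceInner {m n : ℕ} (M N : Matrix (Fin m) (Fin n) ℝ) : ℝ :=
  (Mᵀ * N).trace

open scoped Classical in
/-- The inverse of the positive semidefinite square root of a positive semidefinite
matrix (junk value `0` if the matrix is not positive semidefinite). -/
noncomputable def matInvSqrt {r : ℕ} (S : Matrix (Fin r) (Fin r) ℝ) :
    Matrix (Fin r) (Fin r) ℝ :=
  if h : S.PosSemidef then (psdSqrt h)⁻¹ else 0

/-!
Comparing the penalized loss at `(Â, Φ̂)` with that at `(A, Φ)` and expanding the square gives the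
basic inequality `λ_A ‖Â‖_* + λ_Φ ‖Φ̂‖₁ ≤ ⟨E, Δ_A Z + Δ_Φ P⟩ / T + λ_A ‖A‖_* + λ_Φ ‖Φ‖₁`.
By the dualities between `‖·‖₂` and `‖·‖_*` and between `‖·‖_∞` and `‖·‖₁`, and the choice of the
regularization parameters, the noise term is at most `λ_A / 3 ‖Δ_A‖_* + λ_Φ / 2 ‖Δ_Φ‖₁`.
Both penalties are decomposable: `Δ_{A,2}` has row and column spaces orthogonal to those of `A`, so
`‖A + Δ_{A,2}‖_* = ‖A‖_* + ‖Δ_{A,2}‖_*`, and `Δ_{Φ,2}` vanishes on the support of `Φ`. Hence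
`‖Â‖_* ≥ ‖A‖_* + ‖Δ_{A,2}‖_* - ‖Δ_{A,1}‖_*`, likewise for `Φ̂`, and the cone condition follows.

For the nuclear norm, trace duality `⟨N, M⟩ ≤ ‖N‖₂ ‖M‖_*` is computed in an eigenbasis of `MᵀM`;
the certificate `N = M (MᵀM)^{+1/2}` has `‖N‖₂ ≤ 1` and `⟨N, M⟩ = ‖M‖_*`, which gives the triangle
inequality; additivity on orthogonal pieces is `√(P + Q) = √P + √Q` for `PQ = 0`.
-/

open scoped MatrixOrder ComplexOrder

section Sqrt

variable {n 𝕜 : Type*} [Fintype n] [DecidableEq n] [RCLike 𝕜] {P Q : Matrix n n 𝕜}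

lemma Matrix.PosSemidef.sqrt_mul_sqrt_eq_zero (hP : P.PosSemidef) (hQ : Q.PosSemidef)
    (hPQ : P * Q = 0) : CFC.sqrt P * CFC.sqrt Q = 0 := by
  have hsP := nonneg_iff_posSemidef.mp (CFC.sqrt_nonneg P)
  have hsQ := nonneg_iff_posSemidef.mp (CFC.sqrt_nonneg Q)
  have hPsQ : P * CFC.sqrt Q = 0 := by
    rw [← self_mul_conjTranspose_eq_zero, conjTranspose_mul, hsQ.1, hP.1]
    calc P * CFC.sqrt Q * (CFC.sqrt Q * P) = P * (CFC.sqrt Q * CFC.sqrt Q) * P := by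
          simp only [mul_assoc]
      _ = 0 := by rw [CFC.sqrt_mul_sqrt_self Q hQ.nonneg, hPQ, zero_mul]
  rw [← conjTranspose_mul_self_eq_zero, conjTranspose_mul, hsP.1, hsQ.1]
  calc CFC.sqrt Q * CFC.sqrt P * (CFC.sqrt P * CFC.sqrt Q)
        = CFC.sqrt Q * (CFC.sqrt P * CFC.sqrt P * CFC.sqrt Q) := by simp only [mul_assoc]
    _ = 0 := by rw [CFC.sqrt_mul_sqrt_self P hP.nonneg, hPsQ, mul_zero]

lemma Matrix.PosSemidef.sqrt_add_of_mul_eq_zero (hP : P.PosSemidef) (hQ : Q.PosSemidef)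
    (hPQ : P * Q = 0) : CFC.sqrt (P + Q) = CFC.sqrt P + CFC.sqrt Q := by
  have hsP := nonneg_iff_posSemidef.mp (CFC.sqrt_nonneg P)
  have hsQ := nonneg_iff_posSemidef.mp (CFC.sqrt_nonneg Q)
  have h := hP.sqrt_mul_sqrt_eq_zero hQ hPQ
  have h' : CFC.sqrt Q * CFC.sqrt P = 0 := by
    simpa [hsP.1.eq, hsQ.1.eq] using congr_arg (fun M => Mᴴ) h
  refine CFC.sqrt_unique ?_ (add_nonneg (CFC.sqrt_nonneg P) (CFC.sqrt_nonneg Q))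
  rw [add_mul, mul_add, mul_add, h, h', CFC.sqrt_mul_sqrt_self P hP.nonneg,
    CFC.sqrt_mul_sqrt_self Q hQ.nonneg, add_zero, zero_add]

end Sqrt

section TraceInner

variable {a b : ℕ}

lemma traceInner_eq_sum (M N : Matrix (Fin a) (Fin b) ℝ) :
    traceInner M N = ∑ i, ∑ j, M i j * N i j := by
  rw [traceInner, trace, Finset.sum_comm]
  simp only [diag, mul_apply, transpose_apply]

lemma traceInner_add_right (M N N' : Matrix (Fin a) (Fin b) ℝ) :
    traceInner M (N + N') = traceInner M N + traceInner M N' := by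
  rw [traceInner, traceInner, traceInner, Matrix.mul_add, trace_add]

lemma traceInner_mul_right {c : ℕ} (E : Matrix (Fin a) (Fin b) ℝ) (X : Matrix (Fin a) (Fin c) ℝ)
    (Z : Matrix (Fin c) (Fin b) ℝ) : traceInner E (X * Z) = traceInner (E * Zᵀ) X := by
  rw [traceInner, traceInner, transpose_mul, transpose_transpose, ← Matrix.mul_assoc,
    trace_mul_cycle]

lemma frobNorm_sq (M : Matrix (Fin a) (Fin b) ℝ) : frobNorm M ^ 2 = traceInner M M := by
  refine Real.sq_sqrt ?_
  simpa using (posSemidef_conjTranspose_mul_self M).trace_nonneg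

lemma frobNorm_sub_sq (E R : Matrix (Fin a) (Fin b) ℝ) :
    frobNorm (E - R) ^ 2 = frobNorm E ^ 2 - 2 * traceInner E R + frobNorm R ^ 2 := by
  have hsymm : (Rᵀ * E).trace = (Eᵀ * R).trace := by
    rw [← trace_transpose, transpose_mul, transpose_transpose]
  simp only [frobNorm_sq, traceInner, transpose_sub, Matrix.sub_mul, Matrix.mul_sub, trace_sub,
    hsymm]
  ring

end TraceInner

lemma Matrix.trace_conjStarAlgAut {n R : Type*} [Fintype n] [DecidableEq n] [CommRing R]
    [StarRing R] (U : unitary (Matrix n n R)) (X : Matrix n n R) :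
    (Unitary.conjStarAlgAut R _ U X).trace = X.trace := by
  rw [Unitary.conjStarAlgAut_apply, trace_mul_cycle, Unitary.coe_star_mul_self, Matrix.one_mul]

section NuclearNorm

open scoped Matrix.Norms.L2Operator

variable {a b : ℕ}

lemma psdSqrt_eq_sqrt {r : ℕ} {S : Matrix (Fin r) (Fin r) ℝ} (hS : S.PosSemidef) :
    psdSqrt hS = CFC.sqrt S := by
  rw [CFC.sqrt_eq_cfc, cfc_nnreal_eq_real _ S, hS.1.cfc_eq]
  simp only [IsHermitian.cfc, Unitary.conjStarAlgAut_apply, psdSqrt]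
  congr 3
  funext i
  simp [hS.eigenvalues_nonneg i]

lemma trace_psdSqrt {r : ℕ} {S : Matrix (Fin r) (Fin r) ℝ} (hS : S.PosSemidef) :
    (psdSqrt hS).trace = ∑ i, √(hS.1.eigenvalues i) := by
  rw [psdSqrt, trace_mul_cycle, Unitary.coe_star_mul_self, one_mul, trace_diagonal]
  rfl

lemma nuclearNorm_eq_trace_sqrt (M : Matrix (Fin a) (Fin b) ℝ) :
    nuclearNorm M = (CFC.sqrt (Mᴴ * M)).trace := by
  rw [nuclearNorm, psdSqrt_eq_sqrt]

lemma nuclearNorm_eq_sum_sqrt_eigenvalues (M : Matrix (Fin a) (Fin b) ℝ) :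
    nuclearNorm M = ∑ j, √((posSemidef_conjTranspose_mul_self M).1.eigenvalues j) :=
  trace_psdSqrt _

lemma nuclearNorm_nonneg (M : Matrix (Fin a) (Fin b) ℝ) : 0 ≤ nuclearNorm M := by
  rw [nuclearNorm_eq_sum_sqrt_eigenvalues]
  positivity

@[simp]
lemma nuclearNorm_neg (M : Matrix (Fin a) (Fin b) ℝ) : nuclearNorm (-M) = nuclearNorm M := by
  rw [nuclearNorm_eq_trace_sqrt, nuclearNorm_eq_trace_sqrt, conjTranspose_neg,
    Matrix.neg_mul, Matrix.mul_neg, neg_neg]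

lemma nuclearNorm_add_of_orthogonal (X Y : Matrix (Fin a) (Fin b) ℝ) (h₁ : Xᵀ * Y = 0)
    (h₂ : X * Yᵀ = 0) : nuclearNorm (X + Y) = nuclearNorm X + nuclearNorm Y := by
  rw [← conjTranspose_eq_transpose_of_trivial] at h₁ h₂
  have h₁' : Yᴴ * X = 0 := by
    rw [← conjTranspose_conjTranspose X, ← conjTranspose_mul, h₁, conjTranspose_zero]
  have hgram : (X + Y)ᴴ * (X + Y) = Xᴴ * X + Yᴴ * Y := by
    rw [conjTranspose_add, Matrix.add_mul, Matrix.mul_add, Matrix.mul_add, h₁, h₁', add_zero,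
      zero_add]
  have hortho : Xᴴ * X * (Yᴴ * Y) = 0 := by
    rw [Matrix.mul_assoc, ← Matrix.mul_assoc X, h₂, Matrix.zero_mul, Matrix.mul_zero]
  simp only [nuclearNorm_eq_trace_sqrt, hgram,
    (posSemidef_conjTranspose_mul_self X).sqrt_add_of_mul_eq_zero
      (posSemidef_conjTranspose_mul_self Y) hortho, trace_add]

lemma opNorm_eq_l2_opNorm (N : Matrix (Fin a) (Fin b) ℝ) : opNorm N = ‖N‖ := rfl

lemma dotProduct_le_norm_mul_norm {ι : Type*} [Fintype ι] (u w : ι → ℝ) :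
    u ⬝ᵥ w ≤ ‖WithLp.toLp 2 u‖ * ‖WithLp.toLp 2 w‖ := by
  simpa [EuclideanSpace.inner_toLp_toLp, dotProduct_comm] using
    real_inner_le_norm (WithLp.toLp 2 u) (WithLp.toLp 2 w)

lemma traceInner_eq_sum_dotProduct_mulVec (N M : Matrix (Fin a) (Fin b) ℝ)
    {V : Matrix (Fin b) (Fin b) ℝ} (hV : V * Vᵀ = 1) :
    traceInner N M = ∑ j, (N *ᵥ Vᵀ j) ⬝ᵥ (M *ᵥ Vᵀ j) := by
  calc traceInner N M = (Vᵀ * (Nᵀ * M) * V).trace := by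
        rw [traceInner, trace_mul_cycle, hV, Matrix.one_mul]
    _ = _ := by
        refine Finset.sum_congr rfl fun j _ => ?_
        rw [diag_apply, mul_mul_apply, ← mulVec_mulVec, dotProduct_mulVec, vecMul_transpose,
          dotProduct_comm]

lemma norm_mulVec_eigenvectorBasis (M : Matrix (Fin a) (Fin b) ℝ) (j : Fin b) :
    ‖WithLp.toLp 2 (M *ᵥ (posSemidef_conjTranspose_mul_self M).1.eigenvectorBasis j)‖
      = √((posSemidef_conjTranspose_mul_self M).1.eigenvalues j) := by
  rw [IsHermitian.eigenvalues_eq, norm_eq_sqrt_real_inner, EuclideanSpace.inner_toLp_toLp]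
  simp [← mulVec_mulVec, dotProduct_mulVec, vecMul_transpose]

lemma traceInner_le_opNorm_mul_nuclearNorm (N M : Matrix (Fin a) (Fin b) ℝ) :
    traceInner N M ≤ opNorm N * nuclearNorm M := by
  set hS := (posSemidef_conjTranspose_mul_self M).1
  have hV := Unitary.coe_mul_star_self hS.eigenvectorUnitary
  simp only [Unitary.coe_star, star_eq_conjTranspose, conjTranspose_eq_transpose_of_trivial] at hV
  rw [traceInner_eq_sum_dotProduct_mulVec N M hV,
    nuclearNorm_eq_sum_sqrt_eigenvalues, Finset.mul_sum]
  gcongr with j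
  simp only [IsHermitian.eigenvectorUnitary_transpose_apply]
  calc _ ≤ ‖WithLp.toLp 2 (N *ᵥ hS.eigenvectorBasis j)‖ *
        ‖WithLp.toLp 2 (M *ᵥ hS.eigenvectorBasis j)‖ := dotProduct_le_norm_mul_norm _ _
    _ ≤ ‖N‖ * ‖hS.eigenvectorBasis j‖ * ‖WithLp.toLp 2 (M *ᵥ hS.eigenvectorBasis j)‖ := by
        gcongr; exact l2_opNorm_mulVec N _
    _ = _ := by
        rw [hS.eigenvectorBasis.orthonormal.1 j, mul_one, norm_mulVec_eigenvectorBasis,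
          opNorm_eq_l2_opNorm]

lemma opNorm_le_one_of_conjTranspose_mul_self_eq (N : Matrix (Fin a) (Fin b) ℝ)
    (U : unitary (Matrix (Fin b) (Fin b) ℝ)) (d : Fin b → ℝ) (hd₀ : ∀ j, 0 ≤ d j)
    (hd₁ : ∀ j, d j ≤ 1) (h : Nᴴ * N = Unitary.conjStarAlgAut ℝ _ U (diagonal d)) :
    opNorm N ≤ 1 := by
  have hsq : ‖N‖ * ‖N‖ ≤ 1 := by
    rw [← l2_opNorm_conjTranspose_mul_self, h, Unitary.conjStarAlgAut_apply, ← Unitary.coe_star,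
      CStarRing.norm_mul_coe_unitary, CStarRing.norm_coe_unitary_mul, l2_opNorm_diagonal]
    refine (pi_norm_le_iff_of_nonneg zero_le_one).2 fun j => ?_
    rw [Real.norm_of_nonneg (hd₀ j)]
    exact hd₁ j
  rw [opNorm_eq_l2_opNorm]
  nlinarith [norm_nonneg N]

lemma exists_opNorm_le_one_traceInner_eq_sum_sqrt (M : Matrix (Fin a) (Fin b) ℝ)
    (U : unitary (Matrix (Fin b) (Fin b) ℝ)) (μ : Fin b → ℝ)
    (hM : Mᴴ * M = Unitary.conjStarAlgAut ℝ _ U (diagonal μ)) :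
    ∃ N, opNorm N ≤ 1 ∧ traceInner N M = ∑ j, √(μ j) := by
  set c := Unitary.conjStarAlgAut ℝ (Matrix (Fin b) (Fin b) ℝ) U
  -- `(√0)⁻¹ = 0`, so `g` inverts `√μ` on its support and vanishes elsewhere
  set g : Fin b → ℝ := fun j => (√(μ j))⁻¹
  have hgμ : ∀ j, g j * μ j = √(μ j) := fun j => by rw [inv_mul_eq_div, Real.div_sqrt]
  have hW : (c (diagonal g))ᴴ = c (diagonal g) := by
    rw [← star_eq_conjTranspose, ← map_star, star_eq_conjTranspose, diagonal_conjTranspose,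
      star_trivial]
  refine ⟨M * c (diagonal g), ?_, ?_⟩
  · refine opNorm_le_one_of_conjTranspose_mul_self_eq _ U (fun j => √(μ j) * (√(μ j))⁻¹)
      (fun j => by positivity) (fun j => mul_inv_le_one) ?_
    rw [conjTranspose_mul, hW, Matrix.mul_assoc, ← Matrix.mul_assoc Mᴴ, hM, ← map_mul,
      ← map_mul, diagonal_mul_diagonal, diagonal_mul_diagonal]
    simp only [← mul_assoc, hgμ, g, c]
  · rw [traceInner, transpose_mul, ← conjTranspose_eq_transpose_of_trivial, hW,
      ← conjTranspose_eq_transpose_of_trivial M, Matrix.mul_assoc, hM, ← map_mul,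
      trace_conjStarAlgAut, diagonal_mul_diagonal, trace_diagonal]
    exact Finset.sum_congr rfl fun j _ => hgμ j

lemma exists_opNorm_le_one_traceInner_eq_nuclearNorm (M : Matrix (Fin a) (Fin b) ℝ) :
    ∃ N, opNorm N ≤ 1 ∧ traceInner N M = nuclearNorm M := by
  have hS := (posSemidef_conjTranspose_mul_self M).1
  rw [nuclearNorm_eq_sum_sqrt_eigenvalues]
  exact exists_opNorm_le_one_traceInner_eq_sum_sqrt M hS.eigenvectorUnitary _
    (by simpa using hS.spectral_theorem)

lemma nuclearNorm_add_le (X Y : Matrix (Fin a) (Fin b) ℝ) :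
    nuclearNorm (X + Y) ≤ nuclearNorm X + nuclearNorm Y := by
  obtain ⟨N, hN, hNXY⟩ := exists_opNorm_le_one_traceInner_eq_nuclearNorm (X + Y)
  calc nuclearNorm (X + Y) = traceInner N X + traceInner N Y := by
        rw [← hNXY, traceInner_add_right]
    _ ≤ opNorm N * nuclearNorm X + opNorm N * nuclearNorm Y :=
        add_le_add (traceInner_le_opNorm_mul_nuclearNorm N X)
          (traceInner_le_opNorm_mul_nuclearNorm N Y)
    _ ≤ nuclearNorm X + nuclearNorm Y := by
        gcongr <;> exact mul_le_of_le_one_left (nuclearNorm_nonneg _) hN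

lemma nuclearNorm_add_sub_le (A Δ Δ₂ : Matrix (Fin a) (Fin b) ℝ) (h₁ : Aᵀ * Δ₂ = 0)
    (h₂ : A * Δ₂ᵀ = 0) :
    nuclearNorm A + nuclearNorm Δ₂ - nuclearNorm (Δ - Δ₂) ≤ nuclearNorm (A + Δ) := by
  have h := nuclearNorm_add_le (A + Δ) (-(Δ - Δ₂))
  rw [nuclearNorm_neg, show A + Δ + -(Δ - Δ₂) = A + Δ₂ by abel,
    nuclearNorm_add_of_orthogonal A Δ₂ h₁ h₂] at h
  linarith

end NuclearNorm

section VecNorms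

variable {a b : ℕ}

lemma vecL1_nonneg (M : Matrix (Fin a) (Fin b) ℝ) : 0 ≤ vecL1 M := by
  unfold vecL1
  positivity

lemma vecL1_add_le (X Y : Matrix (Fin a) (Fin b) ℝ) : vecL1 (X + Y) ≤ vecL1 X + vecL1 Y := by
  simp only [vecL1, ← Finset.sum_add_distrib]
  gcongr with i _ j _
  exact abs_add_le _ _

lemma abs_le_vecLinf (N : Matrix (Fin a) (Fin b) ℝ) (i : Fin a) (j : Fin b) :
    |N i j| ≤ vecLinf N :=
  (le_ciSup (Set.finite_range _).bddAbove j).trans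
    (le_ciSup (f := fun i => ⨆ j, |N i j|) (Set.finite_range _).bddAbove i)

lemma traceInner_le_vecLinf_mul_vecL1 (N M : Matrix (Fin a) (Fin b) ℝ) :
    traceInner N M ≤ vecLinf N * vecL1 M := by
  simp only [traceInner_eq_sum, vecL1, Finset.mul_sum]
  refine Finset.sum_le_sum fun i _ => Finset.sum_le_sum fun j _ => ?_
  calc N i j * M i j ≤ |N i j| * |M i j| := (le_abs_self _).trans (abs_mul _ _).le
    _ ≤ vecLinf N * |M i j| := by gcongr; exact abs_le_vecLinf N i j

lemma vecL1_add_sub_le (Φ Δ Δ₁ : Matrix (Fin a) (Fin b) ℝ)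
    (hΔ₁ : ∀ i j, Δ₁ i j = if Φ i j = 0 then 0 else Δ i j) :
    vecL1 Φ + vecL1 (Δ - Δ₁) - vecL1 Δ₁ ≤ vecL1 (Φ + Δ) := by
  have hentry : ∀ i j, |Φ i j| + |(Δ - Δ₁) i j| - |Δ₁ i j| ≤ |(Φ + Δ) i j| := fun i j => by
    rw [Matrix.sub_apply, Matrix.add_apply, hΔ₁]
    split_ifs with h
    · simp [h]
    · simpa using abs_sub_abs_le_abs_sub (Φ i j) (-Δ i j)
  simp only [vecL1, ← Finset.sum_add_distrib, ← Finset.sum_sub_distrib]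
  gcongr with i _ j _
  exact hentry i j

end VecNorms

section LowRank

variable {R ι κ μ ν ρ : Type*} [CommSemiring R] [Fintype ι] [Fintype κ] [Fintype μ] [Fintype ν]
  [Fintype ρ]

lemma transpose_mul_compl_eq_zero (Uk : Matrix ι κ R) (Uc : Matrix ι μ R) (D : Matrix κ κ R)
    (Vk : Matrix ν κ R) (Vc : Matrix ν ρ R) (X : Matrix ι ν R) (hU : Ukᵀ * Uc = 0) :
    (Uk * D * Vkᵀ)ᵀ * (Uc * Ucᵀ * X * Vc * Vcᵀ) = 0 := by
  simp only [transpose_mul, transpose_transpose, Matrix.mul_assoc]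
  rw [← Matrix.mul_assoc Ukᵀ, hU]
  simp

lemma mul_compl_transpose_eq_zero (Uk : Matrix ι κ R) (Uc : Matrix ι μ R) (D : Matrix κ κ R)
    (Vk : Matrix ν κ R) (Vc : Matrix ν ρ R) (X : Matrix ι ν R) (hV : Vkᵀ * Vc = 0) :
    (Uk * D * Vkᵀ) * (Uc * Ucᵀ * X * Vc * Vcᵀ)ᵀ = 0 := by
  simp only [transpose_mul, transpose_transpose, Matrix.mul_assoc]
  rw [← Matrix.mul_assoc Vkᵀ, hV]
  simp

end LowRank

section Estimation

variable {a b : ℕ}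

lemma le_traceInner_div_add_of_loss_le {T : ℝ} (hT : 0 < T) (E R : Matrix (Fin a) (Fin b) ℝ)
    {x y : ℝ} (h : 1 / (2 * T) * frobNorm (E - R) ^ 2 + x ≤ 1 / (2 * T) * frobNorm E ^ 2 + y) :
    x ≤ traceInner E R / T + y := by
  have hexpand : 1 / (2 * T) * frobNorm (E - R) ^ 2
      = 1 / (2 * T) * frobNorm E ^ 2 - traceInner E R / T + 1 / (2 * T) * frobNorm R ^ 2 := by
    rw [frobNorm_sub_sq]
    field_simp
  have hR : 0 ≤ 1 / (2 * T) * frobNorm R ^ 2 := by positivity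
  linarith

lemma traceInner_mul_add_mul_div_le {m q : ℕ} {T lA lΦ : ℝ} (hT : 0 < T)
    (E : Matrix (Fin a) (Fin b) ℝ) (Z : Matrix (Fin m) (Fin b) ℝ) (P : Matrix (Fin q) (Fin b) ℝ)
    (ΔA : Matrix (Fin a) (Fin m) ℝ) (ΔΦ : Matrix (Fin a) (Fin q) ℝ)
    (hlA : lA ≥ 3 / T * opNorm (E * Zᵀ)) (hlΦ : lΦ ≥ 2 / T * vecLinf (E * Pᵀ)) :
    traceInner E (ΔA * Z + ΔΦ * P) / T ≤ lA / 3 * nuclearNorm ΔA + lΦ / 2 * vecL1 ΔΦ := by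
  calc traceInner E (ΔA * Z + ΔΦ * P) / T
      ≤ (opNorm (E * Zᵀ) * nuclearNorm ΔA + vecLinf (E * Pᵀ) * vecL1 ΔΦ) / T := by
        rw [traceInner_add_right, traceInner_mul_right, traceInner_mul_right]
        gcongr
        exacts [traceInner_le_opNorm_mul_nuclearNorm _ _, traceInner_le_vecLinf_mul_vecL1 _ _]
    _ = (3 / T * opNorm (E * Zᵀ)) / 3 * nuclearNorm ΔA
          + (2 / T * vecLinf (E * Pᵀ)) / 2 * vecL1 ΔΦ := by
        field_simp
    _ ≤ lA / 3 * nuclearNorm ΔA + lΦ / 2 * vecL1 ΔΦ := by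
        gcongr
        exacts [nuclearNorm_nonneg _, vecL1_nonneg _]

end Estimation

open scoped Classical in
theorem stmt_7_general
    (p m q T : ℕ) (hT : 0 < T)
    (Y E : Matrix (Fin p) (Fin T) ℝ) (Z : Matrix (Fin m) (Fin T) ℝ)
    (P : Matrix (Fin q) (Fin T) ℝ)
    (A Ah : Matrix (Fin p) (Fin m) ℝ) (Φ Φh : Matrix (Fin p) (Fin q) ℝ)
    (hmodel : Y = A * Z + Φ * P + E)
    (lA lΦ : ℝ) (hlA0 : 0 < lA) (hlΦ0 : 0 < lΦ)
    (hlA : lA ≥ 3 / (T : ℝ) * opNorm (E * Zᵀ))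
    (hlΦ : lΦ ≥ 2 / (T : ℝ) * vecLinf (E * Pᵀ))
    (hopt :
      (1 / (2 * (T : ℝ))) * frobNorm (Y - Ah * Z - Φh * P) ^ 2
          + lA * nuclearNorm Ah + lΦ * vecL1 Φh
        ≤ (1 / (2 * (T : ℝ))) * frobNorm (Y - A * Z - Φ * P) ^ 2
          + lA * nuclearNorm A + lΦ * vecL1 Φ)
    (k : ℕ)
    (Uk : Matrix (Fin p) (Fin k) ℝ) (Uc : Matrix (Fin p) (Fin (p - k)) ℝ)
    (Vk : Matrix (Fin m) (Fin k) ℝ) (Vc : Matrix (Fin m) (Fin (m - k)) ℝ)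
    (hUkc : Ukᵀ * Uc = 0) (hVkc : Vkᵀ * Vc = 0)
    (D : Matrix (Fin k) (Fin k) ℝ) (hA : A = Uk * D * Vkᵀ)
    (ΔA1 ΔA2 : Matrix (Fin p) (Fin m) ℝ)
    (hΔA2 : ΔA2 = Uc * Ucᵀ * (Ah - A) * Vc * Vcᵀ) (hΔA1 : ΔA1 = (Ah - A) - ΔA2)
    (ΔΦ1 ΔΦ2 : Matrix (Fin p) (Fin q) ℝ)
    (hΔΦ1 : ∀ i j, ΔΦ1 i j = if Φ i j = 0 then 0 else (Φh - Φ) i j)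
    (hΔΦ2 : ΔΦ2 = (Φh - Φ) - ΔΦ1) :
    lA * nuclearNorm ΔA2 + lΦ * vecL1 ΔΦ2
      ≤ 3 * lA * nuclearNorm ΔA1 + 3 * lΦ * vecL1 ΔΦ1 := by
  have hT' : (0 : ℝ) < T := Nat.cast_pos.2 hT
  have hbasic : lA * nuclearNorm Ah + lΦ * vecL1 Φh
      ≤ traceInner E ((Ah - A) * Z + (Φh - Φ) * P) / T
        + (lA * nuclearNorm A + lΦ * vecL1 Φ) := by
    refine le_traceInner_div_add_of_loss_le hT' _ _ ?_
    have hres : Y - Ah * Z - Φh * P = E - ((Ah - A) * Z + (Φh - Φ) * P) := by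
      rw [hmodel, Matrix.sub_mul, Matrix.sub_mul]; abel
    have hres₀ : Y - A * Z - Φ * P = E := by rw [hmodel]; abel
    rw [hres, hres₀] at hopt
    linarith
  have hnoise := traceInner_mul_add_mul_div_le hT' E Z P (Ah - A) (Φh - Φ) hlA hlΦ
  have hsplitA : nuclearNorm (Ah - A) ≤ nuclearNorm ΔA1 + nuclearNorm ΔA2 := by
    simpa [hΔA1] using nuclearNorm_add_le ΔA1 ΔA2
  have hsplitΦ : vecL1 (Φh - Φ) ≤ vecL1 ΔΦ1 + vecL1 ΔΦ2 := by
    simpa [hΔΦ2] using vecL1_add_le ΔΦ1 ΔΦ2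
  have hdecA : nuclearNorm A + nuclearNorm ΔA2 - nuclearNorm ΔA1 ≤ nuclearNorm Ah := by
    have h₁ : Aᵀ * ΔA2 = 0 := by
      rw [hΔA2, hA]; exact transpose_mul_compl_eq_zero Uk Uc D Vk Vc _ hUkc
    have h₂ : A * ΔA2ᵀ = 0 := by
      rw [hΔA2, hA]; exact mul_compl_transpose_eq_zero Uk Uc D Vk Vc _ hVkc
    simpa [hΔA1] using nuclearNorm_add_sub_le A (Ah - A) ΔA2 h₁ h₂
  have hdecΦ : vecL1 Φ + vecL1 ΔΦ2 - vecL1 ΔΦ1 ≤ vecL1 Φh := by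
    simpa [hΔΦ2] using vecL1_add_sub_le Φ (Φh - Φ) ΔΦ1 hΔΦ1
  nlinarith [nuclearNorm_nonneg ΔA1, nuclearNorm_nonneg ΔA2, vecL1_nonneg ΔΦ1, vecL1_nonneg ΔΦ2]

open scoped Classical in
/-- Cone membership in the proof of Theorem 3: under the stated choices of the
regularization parameters, the estimation error lies in the restricted cone. -/
theorem stmt_7
    (p m q T : ℕ) (hp : 0 < p) (hm : 0 < m) (hq : 0 < q) (hT : 0 < T)
    (Y E : Matrix (Fin p) (Fin T) ℝ) (Z : Matrix (Fin m) (Fin T) ℝ)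
    (P : Matrix (Fin q) (Fin T) ℝ)
    (A Ah : Matrix (Fin p) (Fin m) ℝ) (Φ Φh : Matrix (Fin p) (Fin q) ℝ)
    (hmodel : Y = A * Z + Φ * P + E)
    (lA lΦ : ℝ) (hlA0 : 0 < lA) (hlΦ0 : 0 < lΦ)
    (hlA : lA ≥ 3 / (T : ℝ) * opNorm (E * Zᵀ))
    (hlΦ : lΦ ≥ 2 / (T : ℝ) * vecLinf (E * Pᵀ))
    (hopt :
      (1 / (2 * (T : ℝ))) * frobNorm (Y - Ah * Z - Φh * P) ^ 2
          + lA * nuclearNorm Ah + lΦ * vecL1 Φh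
        ≤ (1 / (2 * (T : ℝ))) * frobNorm (Y - A * Z - Φ * P) ^ 2
          + lA * nuclearNorm A + lΦ * vecL1 Φ)
    (k : ℕ)
    (Uk : Matrix (Fin p) (Fin k) ℝ) (Uc : Matrix (Fin p) (Fin (p - k)) ℝ)
    (Vk : Matrix (Fin m) (Fin k) ℝ) (Vc : Matrix (Fin m) (Fin (m - k)) ℝ)
    (hUk : Ukᵀ * Uk = 1) (hUc : Ucᵀ * Uc = 1) (hUkc : Ukᵀ * Uc = 0)
    (hUfull : Uk * Ukᵀ + Uc * Ucᵀ = 1)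
    (hVk : Vkᵀ * Vk = 1) (hVc : Vcᵀ * Vc = 1) (hVkc : Vkᵀ * Vc = 0)
    (hVfull : Vk * Vkᵀ + Vc * Vcᵀ = 1)
    (D : Matrix (Fin k) (Fin k) ℝ) (hA : A = Uk * D * Vkᵀ)
    (ΔA1 ΔA2 : Matrix (Fin p) (Fin m) ℝ)
    (hΔA2 : ΔA2 = Uc * Ucᵀ * (Ah - A) * Vc * Vcᵀ) (hΔA1 : ΔA1 = (Ah - A) - ΔA2)
    (ΔΦ1 ΔΦ2 : Matrix (Fin p) (Fin q) ℝ)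
    (hΔΦ1 : ∀ i j, ΔΦ1 i j = if Φ i j = 0 then 0 else (Φh - Φ) i j)
    (hΔΦ2 : ΔΦ2 = (Φh - Φ) - ΔΦ1) :
    lA * nuclearNorm ΔA2 + lΦ * vecL1 ΔΦ2
      ≤ 3 * lA * nuclearNorm ΔA1 + 3 * lΦ * vecL1 ΔΦ1 :=
  stmt_7_general p m q T hT Y E Z P A Ah Φ Φh hmodel lA lΦ hlA0 hlΦ0 hlA hlΦ hopt k Uk Uc Vk Vc hUkc
    hVkc D hA ΔA1 ΔA2 hΔA2 hΔA1 ΔΦ1 ΔΦ2 hΔΦ1 hΔΦ2
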